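/- For real z with |z| < 256/27, ∑_{n≥1} z^n / (n² · binom(4n, n)) = (3/4) · ∫_0^1 (−log(1 − z x³ + z x⁴)) / (x(1−x)) dx. -/

import Mathlib

/-!
Since `1 - z x³ + z x⁴ = 1 - w` with `w = z x³ (1 - x)` and `|w| ≤ 27 |z| / 256 < 1` on `[0, 1]`,
expanding `-log (1 - w) = ∑ wⁿ⁺¹ / (n + 1)` turns the integrand into
`∑ zⁿ⁺¹ x³ⁿ⁺² (1 - x)ⁿ / (n + 1)`, a series dominated by a geometric one. Integrating termwise,
each term is a Beta integral `(3n+2)! n! / (4n+3)!`, which is `4 / (3 (n + 1) binom(4n+4, n+1))`.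
-/

open MeasureTheory Real
open scoped Nat

theorem pow_three_mul_one_sub_le (x : ℝ) : x ^ 3 * (1 - x) ≤ 27 / 256 := by
  -- `27/256 - x³(1 - x) = (4x - 3)² ((4x + 1)² + 2) / 256`
  nlinarith [mul_nonneg (sq_nonneg (4 * x - 3)) (add_nonneg (sq_nonneg (4 * x + 1)) zero_le_two)]

theorem abs_mul_pow_three_mul_one_sub_le (z : ℝ) {x : ℝ} (hx : x ∈ Set.Icc (0 : ℝ) 1) :
    |z * (x ^ 3 * (1 - x))| ≤ |z| * (27 / 256) := by
  rw [abs_mul, abs_of_nonneg (mul_nonneg (pow_nonneg hx.1 3) (sub_nonneg.2 hx.2))]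
  exact mul_le_mul_of_nonneg_left (pow_three_mul_one_sub_le x) (abs_nonneg z)

theorem integral_pow_mul_one_sub_pow_succ (a b : ℕ) :
    ∫ x in (0 : ℝ)..1, x ^ a * (1 - x) ^ (b + 1) =
      (b + 1) / (a + 1) * ∫ x in (0 : ℝ)..1, x ^ (a + 1) * (1 - x) ^ b := by
  have hu : ∀ x ∈ Set.uIcc (0 : ℝ) 1,
      HasDerivAt (fun x : ℝ => (1 - x) ^ (b + 1)) (-((b + 1) * (1 - x) ^ b)) x := fun x _ => by
    refine (((hasDerivAt_id' x).const_sub 1).pow (b + 1)).congr_deriv ?_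
    simp
  have hv : ∀ x ∈ Set.uIcc (0 : ℝ) 1,
      HasDerivAt (fun x : ℝ => x ^ (a + 1) / (a + 1)) (x ^ a) x := fun x _ => by
    refine ((hasDerivAt_pow (a + 1) x).div_const (a + 1 : ℝ)).congr_deriv ?_
    simp
    field_simp
  have parts := intervalIntegral.integral_mul_deriv_eq_deriv_mul hu hv
    (by apply Continuous.intervalIntegrable; fun_prop)
    (by apply Continuous.intervalIntegrable; fun_prop)
  simp only [sub_self, zero_pow (Nat.succ_ne_zero _), zero_mul, zero_div, mul_zero,
    zero_sub] at parts
  simp_rw [mul_comm (_ ^ a), parts, ← intervalIntegral.integral_neg,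
    ← intervalIntegral.integral_const_mul]
  refine intervalIntegral.integral_congr fun x _ => ?_
  field_simp

theorem integral_pow_mul_one_sub_pow (a b : ℕ) :
    ∫ x in (0 : ℝ)..1, x ^ a * (1 - x) ^ b = (a ! * b ! : ℝ) / (a + b + 1)! := by
  induction b generalizing a with
  | zero =>
    simp only [pow_zero, mul_one, integral_pow, one_pow, zero_pow (Nat.succ_ne_zero a), sub_zero,
      Nat.factorial_zero, Nat.cast_one, add_zero, Nat.factorial_succ, Nat.cast_mul, Nat.cast_add]
    field_simp
  | succ b ih =>
    rw [integral_pow_mul_one_sub_pow_succ, ih, show a + 1 + b + 1 = a + (b + 1) + 1 by ring,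
      Nat.factorial_succ a, Nat.factorial_succ b]
    push_cast
    field_simp

theorem three_div_four_mul_factorial_div_factorial (n : ℕ) :
    (3 / 4 : ℝ) * ((3 * n + 2)! * n ! / (4 * n + 3)!) =
      1 / ((n + 1) * (4 * (n + 1)).choose (n + 1)) := by
  rw [Nat.cast_choose ℝ (by omega : n + 1 ≤ 4 * (n + 1)),
    show 4 * (n + 1) - (n + 1) = 3 * n + 2 + 1 by omega, show 4 * (n + 1) = 4 * n + 3 + 1 by ring,
    Nat.factorial_succ (4 * n + 3), Nat.factorial_succ (3 * n + 2), Nat.factorial_succ n]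
  push_cast
  field_simp
  ring

/-- The `n`-th term of the expansion of `-log (1 - z x³ (1 - x)) / (x (1 - x))`. -/
noncomputable def logIntegrandTerm (z : ℝ) (n : ℕ) (x : ℝ) : ℝ :=
  z ^ (n + 1) * x ^ (3 * n + 2) * (1 - x) ^ n / (n + 1)

theorem continuous_logIntegrandTerm (z : ℝ) (n : ℕ) : Continuous (logIntegrandTerm z n) := by
  unfold logIntegrandTerm
  fun_prop

theorem logIntegrandTerm_eq (z : ℝ) (n : ℕ) (x : ℝ) :
    logIntegrandTerm z n x = z * x ^ 2 * (z * (x ^ 3 * (1 - x))) ^ n / (n + 1) := by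
  rw [logIntegrandTerm, mul_pow, mul_pow, ← pow_mul]
  ring

theorem hasSum_logIntegrandTerm {z x : ℝ} (hw : |z * (x ^ 3 * (1 - x))| < 1) (hx₀ : x ≠ 0)
    (hx₁ : x ≠ 1) :
    HasSum (fun n => logIntegrandTerm z n x) (-log (1 - z * x ^ 3 + z * x ^ 4) / (x * (1 - x))) := by
  have hx₁' : 1 - x ≠ 0 := sub_ne_zero.2 hx₁.symm
  have hterm : ∀ n : ℕ, logIntegrandTerm z n x =
      (z * (x ^ 3 * (1 - x))) ^ (n + 1) / (n + 1) / (x * (1 - x)) := fun n => by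
    rw [logIntegrandTerm_eq, pow_succ]
    field_simp
    ring
  simp_rw [hterm, show 1 - z * x ^ 3 + z * x ^ 4 = 1 - z * (x ^ 3 * (1 - x)) by ring]
  exact (hasSum_pow_div_log_of_abs_lt_one hw).div_const _

theorem norm_logIntegrandTerm_le (z : ℝ) (n : ℕ) {x : ℝ} (hx : x ∈ Set.Icc (0 : ℝ) 1) :
    ‖logIntegrandTerm z n x‖ ≤ |z| * (|z| * (27 / 256)) ^ n := by
  rw [logIntegrandTerm_eq, norm_eq_abs, abs_div, abs_mul, abs_mul, abs_pow, abs_pow,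
    abs_of_nonneg hx.1, abs_of_pos (by positivity : (0 : ℝ) < n + 1)]
  have hx2 : x ^ 2 ≤ 1 := pow_le_one₀ hx.1 hx.2
  have hw := pow_le_pow_left₀ (abs_nonneg _) (abs_mul_pow_three_mul_one_sub_le z hx) n
  calc |z| * x ^ 2 * |z * (x ^ 3 * (1 - x))| ^ n / (n + 1)
      ≤ |z| * x ^ 2 * |z * (x ^ 3 * (1 - x))| ^ n :=
        div_le_self (by positivity) (by linarith [(n.cast_nonneg : (0 : ℝ) ≤ n)])
    _ ≤ |z| * 1 * (|z| * (27 / 256)) ^ n := by gcongr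
    _ = |z| * (|z| * (27 / 256)) ^ n := by ring

theorem three_div_four_mul_integral_logIntegrandTerm (z : ℝ) (n : ℕ) :
    (3 / 4) * ∫ x in (0 : ℝ)..1, logIntegrandTerm z n x =
      z ^ (n + 1) / ((n + 1) ^ 2 * (4 * (n + 1)).choose (n + 1)) := by
  have hterm : ∀ x, logIntegrandTerm z n x =
      z ^ (n + 1) / (n + 1) * (x ^ (3 * n + 2) * (1 - x) ^ n) := fun x => by
    unfold logIntegrandTerm
    ring
  simp_rw [hterm, intervalIntegral.integral_const_mul, integral_pow_mul_one_sub_pow,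
    show 3 * n + 2 + n + 1 = 4 * n + 3 by ring, mul_left_comm (3 / 4 : ℝ),
    three_div_four_mul_factorial_div_factorial]
  field_simp

theorem stmt_15 (z : ℝ) (hz : |z| < 256 / 27) :
    ∑' n : ℕ, z ^ (n + 1) / ((n + 1) ^ 2 * (Nat.choose (4 * (n + 1)) (n + 1))) =
      (3 / 4) *
        ∫ x in (0:ℝ)..1, (-Real.log (1 - z * x ^ 3 + z * x ^ 4)) / (x * (1 - x)) := by
  have hr : |z| * (27 / 256) < 1 := by linarith
  have hsum := intervalIntegral.hasSum_integral_of_dominated_convergence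
    (fun n _ => |z| * (|z| * (27 / 256)) ^ n)
    (fun n => (continuous_logIntegrandTerm z n).aestronglyMeasurable)
    (fun n => ae_of_all _ fun x hx => norm_logIntegrandTerm_le z n (Set.Ioc_subset_Icc_self
      (by rwa [Set.uIoc_of_le zero_le_one] at hx)))
    (ae_of_all _ fun _ _ => (summable_geometric_of_lt_one (by positivity) hr).mul_left _)
    intervalIntegrable_const
    (by
      -- at `x = 1` the series sums to `z`, while the integrand takes the junk value `0 / 0 = 0`
      filter_upwards [Measure.ae_ne volume 1] with x hx₁ hx
      rw [Set.uIoc_of_le zero_le_one] at hx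
      exact hasSum_logIntegrandTerm
        ((abs_mul_pow_three_mul_one_sub_le z (Set.Ioc_subset_Icc_self hx)).trans_lt hr)
        hx.1.ne' hx₁)
  rw [← hsum.tsum_eq, ← tsum_mul_left]
  exact tsum_congr fun n => (three_div_four_mul_integral_logIntegrandTerm z n).symm
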